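/- Let G be a finite simple graph on vertex set {x_{11}, …, x_{n1}}, let m_1, …, m_n ≥ 2 be integers, and let G_1, …, G_n be connected finite simple graphs with V(G_i) = {x_{i1}, …, x_{im_i}}. If G_i is vertex decomposable and x_{i1} is a shedding vertex of G_i for every i = 1, …, n, then the attachment graph G(G_1, …, G_n) is vertex decomposable. -/

import Mathlib

variable {V : Type*} [DecidableEq V]

/-- `S` is an independent set of the induced subgraph of `G` on the vertex set `A`. -/
def IsIndepIn (G : SimpleGraph V) (A S : Finset V) : Prop :=
  S ⊆ A ∧ ∀ u ∈ S, ∀ v ∈ S, ¬G.Adj u v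

/-- `S` is a maximal independent set of the induced subgraph of `G` on the vertex set `A`. -/
def IsMaxIndepIn (G : SimpleGraph V) (A S : Finset V) : Prop :=
  IsIndepIn G A S ∧ ∀ T, IsIndepIn G A T → S ⊆ T → S = T

/-- The induced subgraph of `G` on `A` is unmixed: all maximal independent sets
have the same cardinality. -/
def UnmixedOn (G : SimpleGraph V) (A : Finset V) : Prop :=
  ∀ S T, IsMaxIndepIn G A S → IsMaxIndepIn G A T → S.card = T.card

open scoped Classical in
/-- The vertex set `A \ N_G[x]`. -/
noncomputable def delClosedNbhd (G : SimpleGraph V) (A : Finset V) (x : V) : Finset V :=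
  A.filter fun y => y ≠ x ∧ ¬G.Adj x y

/-- The induced subgraph of `G` on `A` is vertex decomposable. -/
inductive VertexDecomposableOn (G : SimpleGraph V) : Finset V → Prop
  | edgeless (A : Finset V) (h : ∀ u ∈ A, ∀ v ∈ A, ¬G.Adj u v) : VertexDecomposableOn G A
  | shed (A : Finset V) (x : V) (hx : x ∈ A)
      (hlink : VertexDecomposableOn G (delClosedNbhd G A x))
      (hdel : VertexDecomposableOn G (A.erase x))
      (hexch : ∀ S, IsIndepIn G (delClosedNbhd G A x) S →
        ∃ y ∈ A, G.Adj x y ∧ IsIndepIn G (A.erase x) (insert y S)) :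
      VertexDecomposableOn G A

/-- `x` is a shedding vertex of the induced subgraph of `G` on `A`. -/
def IsSheddingVertexOn (G : SimpleGraph V) (A : Finset V) (x : V) : Prop :=
  x ∈ A ∧
  VertexDecomposableOn G (delClosedNbhd G A x) ∧
  VertexDecomposableOn G (A.erase x) ∧
  ∀ S, IsIndepIn G (delClosedNbhd G A x) S →
    ∃ y ∈ A, G.Adj x y ∧ IsIndepIn G (A.erase x) (insert y S)

/-- The independence complex of the induced subgraph of `G` on `A` is shellable:
there is an ordering `F 0, F 1, …` of its facets (the maximal independent sets) such
that for every `i`, every face of the subcomplex `(⋃ j < i, ⟨F j⟩) ∩ ⟨F i⟩` is contained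
in a face of that subcomplex of cardinality `(F i).card - 1` (i.e. the subcomplex is
pure of dimension `dim (F i) - 1`). -/
def ShellableOn (G : SimpleGraph V) (A : Finset V) : Prop :=
  ∃ (t : ℕ) (F : Fin t → Finset V),
    Function.Injective F ∧
    (∀ S, IsMaxIndepIn G A S ↔ ∃ i, F i = S) ∧
    ∀ i : Fin t, ∀ S : Finset V, S ⊆ F i → (∃ j, j < i ∧ S ⊆ F j) →
      ∃ S' : Finset V, S ⊆ S' ∧ S' ⊆ F i ∧ (∃ j, j < i ∧ S' ⊆ F j) ∧
        S'.card = (F i).card - 1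

/-- A graph is chordal if every cycle of length at least four has a chord, i.e. an
edge of the graph joining two vertices of the cycle that is not an edge of the cycle. -/
def IsChordal (G : SimpleGraph V) : Prop :=
  ∀ (x : V) (w : G.Walk x x), w.IsCycle → 4 ≤ w.length →
    ∃ u v, u ∈ w.support ∧ v ∈ w.support ∧ G.Adj u v ∧ s(u, v) ∉ w.edges

/-- The induced subgraph of `G` on `A` is a cycle graph on `m` vertices. -/
def IsCycleGraphOn (G : SimpleGraph V) (A : Finset V) (m : ℕ) : Prop :=
  (∀ u v, G.Adj u v → u ∈ A ∧ v ∈ A) ∧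
  Nonempty (G.induce (A : Set V) ≃g SimpleGraph.cycleGraph m)

/-- The independence number of the induced subgraph of `G` on `A`. -/
noncomputable def indepNumOn (G : SimpleGraph V) (A : Finset V) : ℕ :=
  sSup {k | ∃ S, IsIndepIn G A S ∧ S.card = k}

/-!
Write `W(s, t)` for `blockUnion B x s t`, so that the attachment graph is `W(univ, ∅)`.
Since a non-root vertex has all its neighbours in its own block, `W(s, t)` is vertex
decomposable by induction on `s`. Gluing vertex decomposable graphs with no edges between them
preserves vertex decomposability, which settles the case of a block without root. Otherwise
the root `x i` sheds `W(s, t)`: deleting it leaves `B i \ {x i}` next to `W(s \ {i}, t)`, its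
link is the link of `x i` in `B i` next to another `W(s \ {i}, t')`, and the exchange
condition can be met inside `B i`.
-/

section VertexDecomposable

variable {G G' : SimpleGraph V} {A C S : Finset V} {y z : V}

theorem mem_delClosedNbhd : y ∈ delClosedNbhd G A z ↔ y ∈ A ∧ y ≠ z ∧ ¬G.Adj z y := by
  simp [delClosedNbhd]

theorem delClosedNbhd_subset_erase : delClosedNbhd G A z ⊆ A.erase z := fun y hy => by
  rw [mem_delClosedNbhd] at hy
  exact Finset.mem_erase.2 ⟨hy.2.1, hy.1⟩

theorem delClosedNbhd_subset : delClosedNbhd G A z ⊆ A :=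
  delClosedNbhd_subset_erase.trans (Finset.erase_subset _ _)

theorem delClosedNbhd_union :
    delClosedNbhd G (A ∪ C) z = delClosedNbhd G A z ∪ delClosedNbhd G C z := by
  ext y
  simp only [mem_delClosedNbhd, Finset.mem_union]
  tauto

theorem delClosedNbhd_eq_self (h : ∀ v ∈ C, v ≠ z ∧ ¬G.Adj z v) :
    delClosedNbhd G C z = C := by
  ext y
  rw [mem_delClosedNbhd]
  exact ⟨fun hy => hy.1, fun hy => ⟨hy, h y hy⟩⟩

theorem IsIndepIn.insert (hS : IsIndepIn G A S) (hy : y ∈ A) (hyS : ∀ u ∈ S, ¬G.Adj y u) :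
    IsIndepIn G A (insert y S) := by
  refine ⟨Finset.insert_subset hy hS.1, ?_⟩
  intro u hu v hv
  rw [Finset.mem_insert] at hu hv
  rcases hu with rfl | hu <;> rcases hv with rfl | hv
  · exact G.irrefl
  · exact hyS v hv
  · exact fun h => hyS u hu h.symm
  · exact hS.2 u hu v hv

def AdjAgreeOn (G G' : SimpleGraph V) (A : Finset V) : Prop :=
  ∀ u ∈ A, ∀ v ∈ A, (G.Adj u v ↔ G'.Adj u v)

theorem AdjAgreeOn.delClosedNbhd_eq (h : AdjAgreeOn G G' A) (hz : z ∈ A) :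
    delClosedNbhd G A z = delClosedNbhd G' A z := by
  ext y
  simp only [mem_delClosedNbhd]
  exact ⟨fun ⟨hy, hyz, hzy⟩ => ⟨hy, hyz, by rwa [← h z hz y hy]⟩,
    fun ⟨hy, hyz, hzy⟩ => ⟨hy, hyz, by rwa [h z hz y hy]⟩⟩

theorem AdjAgreeOn.exchange (h : AdjAgreeOn G G' A) (hz : z ∈ A)
    (hexch : ∀ S, IsIndepIn G (delClosedNbhd G A z) S →
      ∃ y ∈ A, G.Adj z y ∧ IsIndepIn G (A.erase z) (insert y S)) :
    ∀ S, IsIndepIn G' (delClosedNbhd G' A z) S →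
      ∃ y ∈ A, G'.Adj z y ∧ IsIndepIn G' (A.erase z) (insert y S) := by
  have hindep : ∀ {C S}, S ⊆ A → (IsIndepIn G C S ↔ IsIndepIn G' C S) := fun hSA =>
    and_congr_right fun _ => forall₂_congr fun u hu => forall₂_congr fun v hv =>
      not_congr (h u (hSA hu) v (hSA hv))
  intro S hS
  rw [← h.delClosedNbhd_eq hz] at hS
  have hSA : S ⊆ A := hS.1.trans delClosedNbhd_subset
  obtain ⟨y, hy, hzy, hyS⟩ := hexch S ((hindep hSA).2 hS)
  exact ⟨y, hy, (h z hz y hy).1 hzy, (hindep (Finset.insert_subset hy hSA)).1 hyS⟩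

theorem VertexDecomposableOn.congr (hA : VertexDecomposableOn G A) (h : AdjAgreeOn G G' A) :
    VertexDecomposableOn G' A := by
  induction hA with
  | edgeless A hA => exact .edgeless A fun u hu v hv huv => hA u hu v hv ((h u hu v hv).2 huv)
  | shed A z hz hlink hdel hexch ihlink ihdel =>
    refine .shed A z hz (h.delClosedNbhd_eq hz ▸ ihlink ?_) (ihdel ?_) (h.exchange hz hexch)
    · exact fun u hu v hv => h u (delClosedNbhd_subset hu) v (delClosedNbhd_subset hv)
    · exact fun u hu v hv => h u (Finset.mem_of_mem_erase hu) v (Finset.mem_of_mem_erase hv)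

theorem IsSheddingVertexOn.congr (hz : IsSheddingVertexOn G A z) (h : AdjAgreeOn G G' A) :
    IsSheddingVertexOn G' A z := by
  obtain ⟨hzA, hlink, hdel, hexch⟩ := hz
  refine ⟨hzA, h.delClosedNbhd_eq hzA ▸ hlink.congr ?_, hdel.congr ?_, h.exchange hzA hexch⟩
  · exact fun u hu v hv => h u (delClosedNbhd_subset hu) v (delClosedNbhd_subset hv)
  · exact fun u hu v hv => h u (Finset.mem_of_mem_erase hu) v (Finset.mem_of_mem_erase hv)

theorem VertexDecomposableOn.union_of_shed (hz : z ∈ A) (hzC : z ∉ C)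
    (hAC : ∀ u ∈ A.erase z, ∀ v ∈ C, ¬G.Adj u v)
    (hexch : ∀ S, IsIndepIn G (delClosedNbhd G A z) S →
      ∃ y ∈ A, G.Adj z y ∧ IsIndepIn G (A.erase z) (insert y S))
    (hlink : VertexDecomposableOn G (delClosedNbhd G A z ∪ delClosedNbhd G C z))
    (hdel : VertexDecomposableOn G (A.erase z ∪ C)) :
    VertexDecomposableOn G (A ∪ C) := by
  have herase : (A ∪ C).erase z = A.erase z ∪ C := by
    rw [Finset.erase_union_distrib, Finset.erase_eq_of_notMem hzC]
  rw [← delClosedNbhd_union] at hlink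
  refine .shed _ z (Finset.mem_union_left _ hz) hlink (herase ▸ hdel) fun S hS => ?_
  rw [delClosedNbhd_union] at hS
  obtain ⟨y, hyA, hzy, hyS⟩ := hexch (S.filter (· ∈ delClosedNbhd G A z))
    ⟨fun u hu => (Finset.mem_filter.1 hu).2,
      fun u hu v hv => hS.2 u (Finset.mem_of_mem_filter _ hu) v (Finset.mem_of_mem_filter _ hv)⟩
  have hy : y ∈ A.erase z := hyS.1 (Finset.mem_insert_self _ _)
  refine ⟨y, Finset.mem_union_left _ hyA, hzy, herase ▸ IsIndepIn.insert ⟨?_, hS.2⟩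
    (Finset.mem_union_left _ hy) fun u hu => ?_⟩
  · exact hS.1.trans (Finset.union_subset_union delClosedNbhd_subset_erase delClosedNbhd_subset)
  · rcases Finset.mem_union.1 (hS.1 hu) with huA | huC
    · exact hyS.2 y (Finset.mem_insert_self _ _) u
        (Finset.mem_insert_of_mem (Finset.mem_filter.2 ⟨hu, huA⟩))
    · exact hAC y hy u (delClosedNbhd_subset huC)

theorem VertexDecomposableOn.union (hA : VertexDecomposableOn G A)
    (hC : VertexDecomposableOn G C) (hdisj : Disjoint A C)
    (hAC : ∀ u ∈ A, ∀ v ∈ C, ¬G.Adj u v) :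
    VertexDecomposableOn G (A ∪ C) := by
  induction hA with
  | edgeless A hA =>
    induction hC with
    | edgeless C hC =>
      refine .edgeless _ fun u hu v hv => ?_
      rcases Finset.mem_union.1 hu with hu | hu <;> rcases Finset.mem_union.1 hv with hv | hv
      · exact hA u hu v hv
      · exact hAC u hu v hv
      · exact fun h => hAC v hv u hu h.symm
      · exact hC u hu v hv
    | shed C z hz hlink hdel hexch ihlink ihdel =>
      have hlinkA : delClosedNbhd G A z = A := delClosedNbhd_eq_self fun v hv =>
        ⟨fun h => Finset.disjoint_left.1 hdisj hv (h ▸ hz), fun h => hAC v hv z hz h.symm⟩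
      rw [Finset.union_comm]
      refine union_of_shed hz (Finset.disjoint_right.1 hdisj hz)
        (fun u hu v hv h => hAC v hv u (Finset.mem_of_mem_erase hu) h.symm) hexch ?_ ?_
      · rw [hlinkA, Finset.union_comm]
        exact ihlink (hdisj.mono_right delClosedNbhd_subset)
          fun u hu v hv => hAC u hu v (delClosedNbhd_subset hv)
      · rw [Finset.union_comm]
        exact ihdel (hdisj.mono_right (Finset.erase_subset _ _))
          fun u hu v hv => hAC u hu v (Finset.mem_of_mem_erase hv)
  | shed A z hz hlink hdel hexch ihlink ihdel =>
    have hlinkC : delClosedNbhd G C z = C := delClosedNbhd_eq_self fun v hv =>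
      ⟨fun h => Finset.disjoint_left.1 hdisj hz (h ▸ hv), hAC z hz v hv⟩
    refine union_of_shed hz (Finset.disjoint_left.1 hdisj hz)
      (fun u hu v hv => hAC u (Finset.mem_of_mem_erase hu) v hv) hexch ?_ ?_
    · rw [hlinkC]
      exact ihlink (hdisj.mono_left delClosedNbhd_subset)
        fun u hu v hv => hAC u (delClosedNbhd_subset hu) v hv
    · exact ihdel (hdisj.mono_left (Finset.erase_subset _ _))
        fun u hu v hv => hAC u (Finset.mem_of_mem_erase hu) v hv

end VertexDecomposable

section Blocks

open Function

variable {ι : Type*} {H : SimpleGraph V} {B : ι → Finset V} {x : ι → V} {i j : ι} {u v : V}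

theorem adj_root_iff (hB : Pairwise (Disjoint on B)) (hxB : ∀ i, x i ∈ B i)
    (hlocal : ∀ i, ∀ u ∈ (B i).erase (x i), ∀ v, H.Adj u v → v ∈ B i)
    (hij : i ≠ j) (hv : v ∈ B j) : H.Adj (x i) v ↔ v = x j ∧ H.Adj (x i) (x j) := by
  refine ⟨fun h => ?_, fun ⟨hvx, h⟩ => hvx ▸ h⟩
  by_contra hvx
  have hvx : v ≠ x j := fun hvx' => hvx ⟨hvx', hvx' ▸ h⟩
  exact Finset.disjoint_left.1 (hB hij) (hxB i)
    (hlocal j v (Finset.mem_erase.2 ⟨hvx, hv⟩) (x i) h.symm)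

variable [DecidableEq ι] {s t : Finset ι}

def blockUnion (B : ι → Finset V) (x : ι → V) (s t : Finset ι) : Finset V :=
  s.biUnion fun j => if j ∈ t then (B j).erase (x j) else B j

theorem blockUnion_subset : blockUnion B x s t ⊆ s.biUnion B :=
  Finset.biUnion_mono fun j _ => by split_ifs; exacts [Finset.erase_subset _ _, subset_rfl]

theorem disjoint_blockUnion (hB : Pairwise (Disjoint on B)) (hi : i ∉ s) :
    Disjoint (B i) (blockUnion B x s t) :=
  Finset.disjoint_left.2 fun v hvi hv => by
    obtain ⟨j, hj, hvj⟩ := Finset.mem_biUnion.1 (blockUnion_subset hv)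
    exact Finset.disjoint_left.1 (hB (hj.ne_of_notMem hi).symm) hvi hvj

theorem not_adj_blockUnion (hB : Pairwise (Disjoint on B))
    (hlocal : ∀ i, ∀ u ∈ (B i).erase (x i), ∀ v, H.Adj u v → v ∈ B i)
    (hi : i ∉ s) (hu : u ∈ (B i).erase (x i)) (hv : v ∈ blockUnion B x s t) : ¬H.Adj u v :=
  fun h => Finset.disjoint_left.1 (disjoint_blockUnion hB hi) (hlocal i u hu v h) hv

theorem exists_delClosedNbhd_blockUnion_eq (hB : Pairwise (Disjoint on B))
    (hxB : ∀ i, x i ∈ B i)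
    (hlocal : ∀ i, ∀ u ∈ (B i).erase (x i), ∀ v, H.Adj u v → v ∈ B i) (hi : i ∉ s) :
    ∃ t', delClosedNbhd H (blockUnion B x s t) (x i) = blockUnion B x s t' := by
  classical
  refine ⟨t ∪ s.filter fun j => H.Adj (x i) (x j), ?_⟩
  ext v
  simp only [mem_delClosedNbhd, blockUnion, Finset.mem_biUnion]
  constructor
  · rintro ⟨⟨j, hj, hv⟩, -, hiv⟩
    have hvB : v ∈ B j := by split_ifs at hv; exacts [Finset.mem_of_mem_erase hv, hv]
    rw [adj_root_iff hB hxB hlocal (hj.ne_of_notMem hi).symm hvB] at hiv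
    refine ⟨j, hj, ?_⟩
    split_ifs at hv ⊢ <;> simp_all [Finset.mem_erase]
  · rintro ⟨j, hj, hv⟩
    have hvB : v ∈ B j := by split_ifs at hv; exacts [Finset.mem_of_mem_erase hv, hv]
    rw [adj_root_iff hB hxB hlocal (hj.ne_of_notMem hi).symm hvB]
    have hvx : v ≠ x i := fun h =>
      Finset.disjoint_left.1 (hB (hj.ne_of_notMem hi)) hvB (h ▸ hxB i)
    refine ⟨⟨j, hj, ?_⟩, hvx, ?_⟩ <;> split_ifs at hv ⊢ <;> simp_all [Finset.mem_erase]

theorem vertexDecomposableOn_blockUnion (hB : Pairwise (Disjoint on B)) (hxB : ∀ i, x i ∈ B i)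
    (hlocal : ∀ i, ∀ u ∈ (B i).erase (x i), ∀ v, H.Adj u v → v ∈ B i)
    (hshed : ∀ i, IsSheddingVertexOn H (B i) (x i)) (s t : Finset ι) :
    VertexDecomposableOn H (blockUnion B x s t) := by
  induction s using Finset.induction_on generalizing t with
  | empty => exact .edgeless _ (by simp [blockUnion])
  | insert i s hi ih =>
    obtain ⟨-, hlink, hdel, hexch⟩ := hshed i
    have hsep : ∀ t, ∀ u ∈ (B i).erase (x i), ∀ v ∈ blockUnion B x s t, ¬H.Adj u v :=
      fun t _ hu _ hv => not_adj_blockUnion hB hlocal hi hu hv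
    have hdisj : ∀ t, Disjoint ((B i).erase (x i)) (blockUnion B x s t) :=
      fun t => (disjoint_blockUnion hB hi).mono_left (Finset.erase_subset _ _)
    have hdel' : VertexDecomposableOn H ((B i).erase (x i) ∪ blockUnion B x s t) :=
      hdel.union (ih t) (hdisj t) (hsep t)
    rw [blockUnion, Finset.biUnion_insert, ← blockUnion]
    split_ifs
    · exact hdel'
    refine .union_of_shed (hxB i) (Finset.disjoint_left.1 (disjoint_blockUnion hB hi) (hxB i))
      (hsep t) hexch ?_ hdel'
    obtain ⟨t', ht'⟩ := exists_delClosedNbhd_blockUnion_eq (t := t) hB hxB hlocal hi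
    rw [ht']
    exact hlink.union (ih t') ((hdisj t').mono_left delClosedNbhd_subset_erase)
      fun u hu => hsep t' u (delClosedNbhd_subset_erase hu)

end Blocks

theorem stmt_0_general {V : Type*} [DecidableEq V] (n : ℕ) (x : Fin n → V) (B : Fin n → Finset V)
    (G : SimpleGraph V) (Gs : Fin n → SimpleGraph V)
    -- the edges of `G` join vertices of `G`
    (hGsupp : ∀ u v, G.Adj u v → (∃ i, u = x i) ∧ (∃ j, v = x j))
    -- `B i` is the vertex set of `Gs i`; it contains `x i` and has at least two vertices
    (hxB : ∀ i, x i ∈ B i)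
    -- the vertex sets `B i` are pairwise disjoint
    (hBdisj : ∀ i j, i ≠ j → Disjoint (B i) (B j))
    -- the edges of `Gs i` join vertices of `Gs i`
    (hGssupp : ∀ i, ∀ u v, (Gs i).Adj u v → u ∈ B i ∧ v ∈ B i)
    -- each `Gs i` is vertex decomposable and `x i` is a shedding vertex of `Gs i`
    (hshed : ∀ i, IsSheddingVertexOn (Gs i) (B i) (x i)) :
    VertexDecomposableOn (G ⊔ ⨆ i, Gs i) (Finset.univ.biUnion B) := by
  have hB : Pairwise fun i j => Disjoint (B i) (B j) := fun i j hij => hBdisj i j hij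
  have hidx : ∀ {u i j}, u ∈ B i → u ∈ B j → i = j := fun hi hj =>
    by_contra fun hij => Finset.disjoint_left.1 (hB hij) hi hj
  have hroot : ∀ {u v i}, G.Adj u v → u ∈ B i → u = x i := fun h hu => by
    obtain ⟨⟨a, rfl⟩, -⟩ := hGsupp _ _ h
    rw [hidx (hxB a) hu]
  have hadj : ∀ u v, (G ⊔ ⨆ i, Gs i).Adj u v ↔ G.Adj u v ∨ ∃ k, (Gs k).Adj u v := by
    simp [SimpleGraph.iSup_adj]
  have hlocal : ∀ i, ∀ u ∈ (B i).erase (x i), ∀ v,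
      (G ⊔ ⨆ i, Gs i).Adj u v → v ∈ B i := by
    intro i u hu v h
    rcases (hadj u v).1 h with h | ⟨k, h⟩
    · exact absurd (hroot h (Finset.mem_of_mem_erase hu)) (Finset.ne_of_mem_erase hu)
    · obtain ⟨huk, hvk⟩ := hGssupp k u v h
      exact hidx huk (Finset.mem_of_mem_erase hu) ▸ hvk
  have hagree : ∀ i, AdjAgreeOn (Gs i) (G ⊔ ⨆ i, Gs i) (B i) := by
    refine fun i u hu v hv => ⟨fun h => (hadj u v).2 (.inr ⟨i, h⟩), fun h => ?_⟩
    rcases (hadj u v).1 h with h | ⟨k, h⟩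
    · exact absurd ((hroot h hu).trans (hroot h.symm hv).symm) h.ne
    · exact hidx (hGssupp k u v h).1 hu ▸ h
  simpa [blockUnion] using vertexDecomposableOn_blockUnion hB hxB hlocal
    (fun i => (hshed i).congr (hagree i)) Finset.univ ∅

/-- If each `Gs i` is vertex decomposable and `x i` is a shedding vertex of
`Gs i`, then the attachment graph `G(G_1, …, G_n)` is vertex decomposable. -/
theorem stmt_0 {V : Type*} [DecidableEq V] (n : ℕ) (x : Fin n → V) (B : Fin n → Finset V)
    (G : SimpleGraph V) (Gs : Fin n → SimpleGraph V)
    -- `x` lists the vertices of `G`, which are pairwise distinct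
    (hxinj : Function.Injective x)
    -- the edges of `G` join vertices of `G`
    (hGsupp : ∀ u v, G.Adj u v → (∃ i, u = x i) ∧ (∃ j, v = x j))
    -- `B i` is the vertex set of `Gs i`; it contains `x i` and has at least two vertices
    (hxB : ∀ i, x i ∈ B i)
    (hBcard : ∀ i, 2 ≤ (B i).card)
    -- the vertex sets `B i` are pairwise disjoint
    (hBdisj : ∀ i j, i ≠ j → Disjoint (B i) (B j))
    -- the edges of `Gs i` join vertices of `Gs i`
    (hGssupp : ∀ i, ∀ u v, (Gs i).Adj u v → u ∈ B i ∧ v ∈ B i)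
    -- each `Gs i` is connected
    (hconn : ∀ i, ((Gs i).induce ((B i : Set V))).Connected)
    -- each `Gs i` is vertex decomposable and `x i` is a shedding vertex of `Gs i`
    (hvd : ∀ i, VertexDecomposableOn (Gs i) (B i))
    (hshed : ∀ i, IsSheddingVertexOn (Gs i) (B i) (x i)) :
    VertexDecomposableOn (G ⊔ ⨆ i, Gs i) (Finset.univ.biUnion B) :=
  stmt_0_general n x B G Gs hGsupp hxB hBdisj hGssupp hshed
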